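/- arXiv:2111.07636 — 2 statements merged into one kernel-verified Lean document; each statement's English description precedes it below -/
import Mathlib

section
/- For pure states ψ ∈ H_B and φ ∈ H_{B̄} of two disjoint sets of qudits, the dimensions satisfy the Cauchy-product relation: dim ΔW_k^{ψ⊗φ} = Σ_{l+m=k} (dim ΔW_l^ψ)(dim ΔW_m^φ), where ΔW_k denotes the orthogonal complement of W_{k−1} inside W_k. Equivalently, the entanglement polynomial is multiplicative: f(ψ⊗φ) = f(ψ)·f(φ). -/
noncomputable section

open Matrix

/-- An operator on `N` qudits (Hilbert space modeled as functions `(ι → Fin d) → ℂ`)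
is *supported on* the set of sites `B` if it has the form `O_B ⊗ I_{B̄}`:
its matrix elements vanish unless the configurations agree off `B`, and they do not
depend on the (common) configuration off `B`. -/
def SupportedOn {ι : Type*} [DecidableEq ι] (d : ℕ) (B : Finset ι)
    (M : Matrix (ι → Fin d) (ι → Fin d) ℂ) : Prop :=
  (∀ x y : ι → Fin d, (∃ i ∉ B, x i ≠ y i) → M x y = 0) ∧
  (∀ x y z z' : ι → Fin d,
    M (fun i => if i ∈ B then x i else z i) (fun i => if i ∈ B then y i else z i) =
    M (fun i => if i ∈ B then x i else z' i) (fun i => if i ∈ B then y i else z' i))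

/-- `V^k`: the span of operators supported on at most `k` sites (the `k`-local operators). -/
def Vk (ι : Type*) [DecidableEq ι] (d k : ℕ) :
    Submodule ℂ (Matrix (ι → Fin d) (ι → Fin d) ℂ) :=
  Submodule.span ℂ {M | ∃ B : Finset ι, B.card ≤ k ∧ SupportedOn d B M}

/-- `W_k^ψ = Span{Oψ : O ∈ V^k}`. -/
def Wk {ι : Type*} [Fintype ι] [DecidableEq ι] {d : ℕ} (ψ : (ι → Fin d) → ℂ) (k : ℕ) :
    Submodule ℂ ((ι → Fin d) → ℂ) :=
  Submodule.span ℂ {v | ∃ M ∈ Vk ι d k, v = M.mulVec ψ}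

/-- `dim W_k^ψ`. -/
def dimW {ι : Type*} [Fintype ι] [DecidableEq ι] {d : ℕ} (ψ : (ι → Fin d) → ℂ) (k : ℕ) : ℕ :=
  Module.finrank ℂ (Wk ψ k)

/-- `dim ΔW_k^ψ = dim W_k^ψ − dim W_{k−1}^ψ` (with `W_{−1} = 0`), as an integer. -/
def deltaDimW {ι : Type*} [Fintype ι] [DecidableEq ι] {d : ℕ} (ψ : (ι → Fin d) → ℂ)
    (k : ℕ) : ℤ :=
  (dimW ψ k : ℤ) - if k = 0 then 0 else (dimW ψ (k - 1) : ℤ)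

/-- The entanglement polynomial `f(ψ) = Σ_k (dim ΔW_k^ψ) x^k ∈ ℤ[x]`. -/
def entPoly {ι : Type*} [Fintype ι] [DecidableEq ι] {d : ℕ} (ψ : (ι → Fin d) → ℂ) :
    Polynomial ℤ :=
  ∑ k ∈ Finset.range (Fintype.card ι + 1), Polynomial.C (deltaDimW ψ k) * Polynomial.X ^ k

/-- Tensor product of states of two disjoint sets of qudits. -/
def tens {ι₁ ι₂ : Type*} {d : ℕ} (ψ : (ι₁ → Fin d) → ℂ) (φ : (ι₂ → Fin d) → ℂ) :
    (ι₁ ⊕ ι₂ → Fin d) → ℂ :=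
  fun x => ψ (fun i => x (Sum.inl i)) * φ (fun j => x (Sum.inr j))

end


/-!
A filtration basis of `k ↦ W_k^χ` is a linearly independent family `v` with degrees `deg` such
that each `W_k^χ` is spanned by the `v i` with `deg i ≤ k`; then `f(χ) = Σ_i x^{deg i}`. Every
operator supported on `B ⊆ ι₁ ⊕ ι₂` is a combination of products `O₁ ⊗ O₂` with `O₁` supported on
`B ∩ ι₁` and `O₂` on `B ∩ ι₂` (elementary operators factor), so
`W_k^{ψ⊗φ} = Σ_{l+m≤k} W_l^ψ ⊗ W_m^φ`. Hence the products `v i ⊗ w j` of filtration bases of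
`ψ` and `φ`, which stay linearly independent, form a filtration basis of `ψ ⊗ φ` with degree
`deg₁ i + deg₂ j`, and the generating polynomials multiply. The Cauchy-product formula is the
coefficientwise form of `f(ψ ⊗ φ) = f(ψ) f(φ)`.
-/

open Matrix Submodule Finset

section Filtration

variable {K H : Type*} [Field K] [AddCommGroup H] [Module K H]

def IsFiltrationBasis (W : ℕ → Submodule K H) {α : Type*} (v : α → H) (deg : α → ℕ) : Prop :=
  LinearIndependent K v ∧ ∀ k, W k = span K (v '' {i | deg i ≤ k})

theorem exists_linearIndepOn_filtration [FiniteDimensional K H] {W : ℕ → Submodule K H}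
    (hW : Monotone W) (n : ℕ) :
    ∃ (s : Set H) (deg : H → ℕ), LinearIndepOn K id s ∧ (∀ x ∈ s, deg x ≤ n) ∧
      ∀ k, W (min k n) = span K {x ∈ s | deg x ≤ k} := by
  classical
  induction n with
  | zero =>
    obtain ⟨s, hsW, hspan, hs⟩ := exists_linearIndependent K (W 0 : Set H)
    refine ⟨s, fun _ => 0, hs, fun _ _ => le_rfl, fun k => ?_⟩
    simp only [Nat.zero_le, and_true, Set.ofPred_mem_eq, Nat.min_zero, hspan,
      span_coe_eq_restrictScalars, restrictScalars_self]
  | succ n ih =>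
    obtain ⟨s, deg, hs, hdeg, hsW⟩ := ih
    have hsub : s ⊆ W (n + 1) := fun x hx => by
      have hxW : x ∈ W (min n n) := by rw [hsW n]; exact subset_span ⟨hx, hdeg x hx⟩
      exact hW n.le_succ (by simpa using hxW)
    obtain ⟨b, hbW, hsb, hWb, hb⟩ := exists_linearIndepOn_id_extension hs hsub
    refine ⟨b, fun x => if x ∈ s then deg x else n + 1, hb, fun x _ => ?_, fun k => ?_⟩
    · dsimp only
      split_ifs with hx
      · exact (hdeg x hx).trans n.le_succ
      · exact le_rfl
    · rcases le_or_gt k n with hk | hk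
      · have hWk := hsW k
        rw [min_eq_left hk] at hWk
        rw [min_eq_left (hk.trans n.le_succ), hWk]
        congr 1
        ext x
        constructor
        · rintro ⟨hx, hxk⟩
          exact ⟨hsb hx, by simpa [hx] using hxk⟩
        · rintro ⟨hx, hxk⟩
          by_cases hxs : x ∈ s
          · exact ⟨hxs, by simpa [hxs] using hxk⟩
          · simp only [hxs, if_false] at hxk; omega
      · have hall : {x ∈ b | (if x ∈ s then deg x else n + 1) ≤ k} = b := by
          refine Set.sep_eq_self_iff_mem_true.2 fun x _ => ?_
          split_ifs with hx
          · exact (hdeg x hx).trans hk.le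
          · exact hk
        rw [min_eq_right hk, hall]
        exact le_antisymm hWb (span_le.2 hbW)

theorem exists_isFiltrationBasis [FiniteDimensional K H] {W : ℕ → Submodule K H}
    (hW : Monotone W) {n : ℕ} (hn : ∀ k, n ≤ k → W k = W n) :
    ∃ (s : Finset H) (deg : H → ℕ), IsFiltrationBasis W (Subtype.val : s → H) (fun x => deg x) := by
  obtain ⟨s, deg, hs, -, hsW⟩ := exists_linearIndepOn_filtration hW n
  lift s to Finset H using LinearIndependent.setFinite hs
  refine ⟨s, deg, hs, fun k => ?_⟩
  have hWk : W k = W (min k n) := by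
    rcases le_total k n with hk | hk
    · rw [min_eq_left hk]
    · rw [min_eq_right hk, hn k hk]
  rw [hWk, hsW k]
  congr 1
  ext x
  simp [and_comm]

theorem IsFiltrationBasis.finrank_eq {W : ℕ → Submodule K H} {α : Type*} [Fintype α]
    {v : α → H} {deg : α → ℕ} (hv : IsFiltrationBasis W v deg) (k : ℕ) :
    Module.finrank K (W k) = #{i | deg i ≤ k} := by
  classical
  rw [hv.2 k, Set.image_eq_range]
  exact (finrank_span_eq_card (hv.1.comp _ Subtype.val_injective)).trans (Fintype.card_subtype _)

theorem IsFiltrationBasis.finrank_sub_finrank_pred {W : ℕ → Submodule K H} {α : Type*}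
    [Fintype α] {v : α → H} {deg : α → ℕ} (hv : IsFiltrationBasis W v deg) (k : ℕ) :
    (Module.finrank K (W k) : ℤ) - (if k = 0 then 0 else (Module.finrank K (W (k - 1)) : ℤ)) =
      #{i | deg i = k} := by
  classical
  rcases k with _ | k
  · simp [hv.finrank_eq]
  · have hsplit : #{i | deg i ≤ k + 1} = #{i | deg i ≤ k} + #{i | deg i = k + 1} := by
      rw [← card_union_of_disjoint (disjoint_filter.2 fun i _ h => by omega),
        ← filter_or]
      congr 1
      ext i
      simp only [mem_filter, mem_univ, true_and]
      omega
    simp [hv.finrank_eq, hsplit]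

theorem IsFiltrationBasis.map₂ {M N : Type*} [AddCommGroup M] [Module K M] [AddCommGroup N]
    [Module K N] {W₁ : ℕ → Submodule K M} {W₂ : ℕ → Submodule K N} {W : ℕ → Submodule K H}
    {α β : Type*} {v : α → M} {w : β → N} {deg₁ : α → ℕ} {deg₂ : β → ℕ}
    (hv : IsFiltrationBasis W₁ v deg₁) (hw : IsFiltrationBasis W₂ w deg₂) (f : M →ₗ[K] N →ₗ[K] H)
    (hf : LinearIndependent K fun p : α × β => f (v p.1) (w p.2))
    (hW : ∀ k, W k = ⨆ p ∈ {p : ℕ × ℕ | p.1 + p.2 ≤ k}, map₂ f (W₁ p.1) (W₂ p.2)) :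
    IsFiltrationBasis W (fun p : α × β => f (v p.1) (w p.2)) (fun p => deg₁ p.1 + deg₂ p.2) := by
  refine ⟨hf, fun k => ?_⟩
  simp_rw [hW k, hv.2, hw.2, map₂_span_span, ← span_iUnion₂]
  congr 1
  ext x
  simp only [Set.mem_iUnion, Set.mem_image2, Set.mem_image, Set.mem_ofPred_eq, exists_prop]
  constructor
  · rintro ⟨p, hp, _, ⟨i, hi, rfl⟩, _, ⟨j, hj, rfl⟩, rfl⟩
    exact ⟨(i, j), by dsimp only; omega, rfl⟩
  · rintro ⟨⟨i, j⟩, hij, rfl⟩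
    exact ⟨(deg₁ i, deg₂ j), hij, _, ⟨i, le_rfl, rfl⟩, _, ⟨j, le_rfl, rfl⟩, rfl⟩

end Filtration

section LocalOperators

variable {ι : Type*} [DecidableEq ι] {d : ℕ}

theorem Vk_mono {k k' : ℕ} (h : k ≤ k') : Vk ι d k ≤ Vk ι d k' :=
  span_mono fun _ ⟨B, hB, hM⟩ => ⟨B, hB.trans h, hM⟩

theorem Vk_eq_of_card_le [Fintype ι] {k : ℕ} (h : Fintype.card ι ≤ k) :
    Vk ι d k = Vk ι d (Fintype.card ι) :=
  le_antisymm (span_mono fun _ ⟨B, _, hM⟩ => ⟨B, B.card_le_univ, hM⟩) (Vk_mono h)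

open Classical in
/-- The operator `|a_B⟩⟨b_B| ⊗ 1_{B̄}`. -/
noncomputable def localUnit (B : Finset ι) (a b : ι → Fin d) : Matrix (ι → Fin d) (ι → Fin d) ℂ :=
  of fun x y => if (∀ i ∈ B, x i = a i ∧ y i = b i) ∧ ∀ i ∉ B, x i = y i then 1 else 0

theorem supportedOn_localUnit (B : Finset ι) (a b : ι → Fin d) :
    SupportedOn d B (localUnit B a b) := by
  refine ⟨fun x y ⟨i, hi, hxy⟩ => if_neg fun h => hxy (h.2 i hi), fun x y z z' => ?_⟩
  simp +contextual [localUnit]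

theorem SupportedOn.eq_sum_smul_localUnit [Fintype ι] {B : Finset ι}
    {M : Matrix (ι → Fin d) (ι → Fin d) ℂ} (hM : SupportedOn d B M) (z₀ : ι → Fin d) :
    M = ∑ a ∈ univ.filter (fun a : ι → Fin d => ∀ i ∉ B, a i = z₀ i),
      ∑ b ∈ univ.filter (fun b : ι → Fin d => ∀ i ∉ B, b i = z₀ i), M a b • localUnit B a b := by
  classical
  set S := univ.filter fun a : ι → Fin d => ∀ i ∉ B, a i = z₀ i
  set patch : (ι → Fin d) → ι → Fin d := fun x i => if i ∈ B then x i else z₀ i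
  have patch_mem : ∀ x, patch x ∈ S := fun x => by simp +contextual [S, patch]
  have eq_patch : ∀ x, ∀ a ∈ S, (∀ i ∈ B, x i = a i) → a = patch x := fun x a ha hxa => by
    ext i
    by_cases hi : i ∈ B
    · simp [patch, hi, hxa i hi]
    · simp_all [S, patch]
  ext x y
  simp only [Matrix.sum_apply, Matrix.smul_apply, smul_eq_mul]
  by_cases hxy : ∀ i ∉ B, x i = y i
  · rw [sum_eq_single_of_mem _ (patch_mem x), sum_eq_single_of_mem _ (patch_mem y)]
    · have hunit : localUnit B (patch x) (patch y) x y = 1 :=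
        if_pos ⟨fun i hi => by simp [patch, hi], hxy⟩
      have hoff : (fun i => if i ∈ B then y i else x i) = y := by
        funext i
        split_ifs with hi
        · rfl
        · exact hxy i hi
      have hpatch : M (patch x) (patch y) = M x y := by
        simpa [hoff] using hM.2 x y z₀ x
      rw [hunit, hpatch, mul_one]
    · intro b hb hne
      have hunit : localUnit B (patch x) b x y = 0 :=
        if_neg fun h => hne (eq_patch y b hb fun i hi => (h.1 i hi).2)
      rw [hunit, mul_zero]
    · intro a ha hne
      refine sum_eq_zero fun b _ => ?_
      have hunit : localUnit B a b x y = 0 :=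
        if_neg fun h => hne (eq_patch x a ha fun i hi => (h.1 i hi).1)
      rw [hunit, mul_zero]
  · push Not at hxy
    rw [hM.1 x y hxy]
    refine (sum_eq_zero fun a _ => sum_eq_zero fun b _ => ?_).symm
    obtain ⟨i, hi, hne⟩ := hxy
    have hunit : localUnit B a b x y = 0 := if_neg fun h => hne (h.2 i hi)
    rw [hunit, mul_zero]

theorem SupportedOn.mem_span_localUnit [Fintype ι] {B : Finset ι}
    {M : Matrix (ι → Fin d) (ι → Fin d) ℂ} (hM : SupportedOn d B M) :
    M ∈ span ℂ (Set.range fun ab : (ι → Fin d) × (ι → Fin d) => localUnit B ab.1 ab.2) := by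
  rcases isEmpty_or_nonempty (ι → Fin d) with _ | ⟨⟨z₀⟩⟩
  · rw [Subsingleton.elim M 0]
    exact zero_mem _
  rw [hM.eq_sum_smul_localUnit z₀]
  exact sum_mem fun a _ => sum_mem fun b _ => smul_mem _ _ (subset_span ⟨(a, b), rfl⟩)

theorem Vk_eq_span_localUnit [Fintype ι] (k : ℕ) :
    Vk ι d k = span ℂ {M | ∃ B : Finset ι, B.card ≤ k ∧ ∃ a b, M = localUnit B a b} := by
  refine le_antisymm (span_le.2 fun M ⟨B, hB, hM⟩ => ?_)
    (span_mono fun _ ⟨B, hB, a, b, hM⟩ => ⟨B, hB, hM ▸ supportedOn_localUnit B a b⟩)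
  refine span_mono ?_ hM.mem_span_localUnit
  rintro _ ⟨ab, rfl⟩
  exact ⟨B, hB, ab.1, ab.2, rfl⟩

variable [Fintype ι]

theorem Wk_eq_map (ψ : (ι → Fin d) → ℂ) (k : ℕ) :
    Wk ψ k = (Vk ι d k).map ((mulVecBilin ℂ ℂ).flip ψ) := by
  rw [Wk, ← span_eq (map _ _), map_coe]
  congr 1
  ext v
  simp [eq_comm]

theorem SupportedOn.mulVec_mem_Wk {B : Finset ι} {M : Matrix (ι → Fin d) (ι → Fin d) ℂ}
    (hM : SupportedOn d B M) (ψ : (ι → Fin d) → ℂ) : M *ᵥ ψ ∈ Wk ψ B.card :=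
  subset_span ⟨M, subset_span ⟨B, le_rfl, hM⟩, rfl⟩

theorem Wk_mono (ψ : (ι → Fin d) → ℂ) : Monotone (Wk ψ) := fun _ _ h => by
  simpa only [Wk_eq_map] using map_mono (Vk_mono h)

theorem Wk_eq_of_card_le (ψ : (ι → Fin d) → ℂ) {k : ℕ} (h : Fintype.card ι ≤ k) :
    Wk ψ k = Wk ψ (Fintype.card ι) := by
  rw [Wk_eq_map, Wk_eq_map, Vk_eq_of_card_le h]

theorem deltaDimW_eq_zero_of_card_lt (ψ : (ι → Fin d) → ℂ) {k : ℕ} (h : Fintype.card ι < k) :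
    deltaDimW ψ k = 0 := by
  rw [deltaDimW, if_neg (by omega), dimW, dimW, Wk_eq_of_card_le ψ h.le,
    Wk_eq_of_card_le ψ (Nat.le_sub_one_of_lt h), sub_self]

theorem coeff_entPoly (ψ : (ι → Fin d) → ℂ) (k : ℕ) : (entPoly ψ).coeff k = deltaDimW ψ k := by
  simp only [entPoly, Polynomial.finsetSum_coeff, Polynomial.coeff_C_mul_X_pow,
    sum_ite_eq, mem_range]
  split_ifs with hk
  · rfl
  · exact (deltaDimW_eq_zero_of_card_lt ψ (by omega)).symm

theorem exists_isFiltrationBasis_Wk (ψ : (ι → Fin d) → ℂ) :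
    ∃ (s : Finset ((ι → Fin d) → ℂ)) (deg : ((ι → Fin d) → ℂ) → ℕ),
      IsFiltrationBasis (Wk ψ) (Subtype.val : s → _) (fun x => deg x) :=
  exists_isFiltrationBasis (Wk_mono ψ) fun _ => Wk_eq_of_card_le ψ

theorem IsFiltrationBasis.entPoly_eq {ψ : (ι → Fin d) → ℂ} {α : Type*} [Fintype α]
    {v : α → (ι → Fin d) → ℂ} {deg : α → ℕ} (hv : IsFiltrationBasis (Wk ψ) v deg) :
    entPoly ψ = ∑ i, Polynomial.X ^ deg i := by
  ext k
  rw [coeff_entPoly, deltaDimW, dimW, dimW, hv.finrank_sub_finrank_pred,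
    Polynomial.finsetSum_coeff]
  simp [Polynomial.coeff_X_pow, eq_comm]

end LocalOperators

section Bipartite

variable {ι₁ ι₂ : Type*} {d : ℕ}

def tensBilin :
    ((ι₁ → Fin d) → ℂ) →ₗ[ℂ] ((ι₂ → Fin d) → ℂ) →ₗ[ℂ] ((ι₁ ⊕ ι₂ → Fin d) → ℂ) :=
  LinearMap.mk₂ ℂ tens
    (fun _ _ _ => funext fun _ => add_mul _ _ _)
    (fun _ _ _ => funext fun _ => mul_assoc _ _ _)
    (fun _ _ _ => funext fun _ => mul_add _ _ _)
    (fun _ _ _ => funext fun _ => mul_left_comm _ _ _)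

theorem linearIndependent_tens {α β : Type*} [Fintype α] [Fintype β]
    {v : α → (ι₁ → Fin d) → ℂ} {w : β → (ι₂ → Fin d) → ℂ}
    (hv : LinearIndependent ℂ v) (hw : LinearIndependent ℂ w) :
    LinearIndependent ℂ fun p : α × β => tens (v p.1) (w p.2) := by
  rw [Fintype.linearIndependent_iff]
  intro c hc p
  have hcoeff : ∀ b x, ∑ a, c (a, b) * v a x = 0 := by
    intro b x
    refine Fintype.linearIndependent_iff.1 hw (fun b => ∑ a, c (a, b) * v a x) ?_ b
    funext y
    have hxy := congrFun hc (Sum.elim x y)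
    simp only [Finset.sum_apply, Pi.smul_apply, smul_eq_mul, tens, Sum.elim_inl, Sum.elim_inr,
      Pi.zero_apply, Fintype.sum_prod_type] at hxy
    rw [sum_comm] at hxy
    simpa [sum_mul, mul_assoc] using hxy
  exact Fintype.linearIndependent_iff.1 hv (fun a => c (a, p.2))
    (funext fun x => by simpa using hcoeff p.2 x) p.1

def kron (M₁ : Matrix (ι₁ → Fin d) (ι₁ → Fin d) ℂ) (M₂ : Matrix (ι₂ → Fin d) (ι₂ → Fin d) ℂ) :
    Matrix (ι₁ ⊕ ι₂ → Fin d) (ι₁ ⊕ ι₂ → Fin d) ℂ :=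
  of fun x y => M₁ (fun i => x (Sum.inl i)) (fun i => y (Sum.inl i)) *
    M₂ (fun j => x (Sum.inr j)) (fun j => y (Sum.inr j))

def kronBilin : Matrix (ι₁ → Fin d) (ι₁ → Fin d) ℂ →ₗ[ℂ]
    Matrix (ι₂ → Fin d) (ι₂ → Fin d) ℂ →ₗ[ℂ] Matrix (ι₁ ⊕ ι₂ → Fin d) (ι₁ ⊕ ι₂ → Fin d) ℂ :=
  LinearMap.mk₂ ℂ kron
    (fun _ _ _ => ext fun _ _ => add_mul _ _ _)
    (fun _ _ _ => ext fun _ _ => mul_assoc _ _ _)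
    (fun _ _ _ => ext fun _ _ => mul_add _ _ _)
    (fun _ _ _ => ext fun _ _ => mul_left_comm _ _ _)

theorem kron_localUnit (B : Finset (ι₁ ⊕ ι₂)) (a b : ι₁ ⊕ ι₂ → Fin d) :
    kron (localUnit B.toLeft (fun i => a (Sum.inl i)) (fun i => b (Sum.inl i)))
      (localUnit B.toRight (fun j => a (Sum.inr j)) (fun j => b (Sum.inr j))) =
      localUnit B a b := by
  ext x y
  simp only [kron, localUnit, of_apply, ite_zero_mul_ite_zero, one_mul]
  congr 1
  simp only [mem_toLeft, mem_toRight, Sum.forall]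
  exact propext (by tauto)

variable [DecidableEq ι₁] [DecidableEq ι₂]

theorem SupportedOn.kron {B₁ : Finset ι₁} {B₂ : Finset ι₂}
    {M₁ : Matrix (ι₁ → Fin d) (ι₁ → Fin d) ℂ} {M₂ : Matrix (ι₂ → Fin d) (ι₂ → Fin d) ℂ}
    (h₁ : SupportedOn d B₁ M₁) (h₂ : SupportedOn d B₂ M₂) :
    SupportedOn d (B₁.disjSum B₂) (kron M₁ M₂) := by
  constructor
  · rintro x y ⟨i | i, hi, hxy⟩
    · have h0 := h₁.1 (fun i => x (Sum.inl i)) (fun i => y (Sum.inl i)) ⟨i, by simpa using hi, hxy⟩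
      simp [_root_.kron, h0]
    · have h0 := h₂.1 (fun j => x (Sum.inr j)) (fun j => y (Sum.inr j)) ⟨i, by simpa using hi, hxy⟩
      simp [_root_.kron, h0]
  · intro x y z z'
    simp only [_root_.kron, of_apply, inl_mem_disjSum, inr_mem_disjSum]
    rw [h₁.2 _ _ _ (fun i => z' (Sum.inl i)), h₂.2 _ _ _ (fun j => z' (Sum.inr j))]

theorem kron_mem_Vk {l m : ℕ} {M₁ : Matrix (ι₁ → Fin d) (ι₁ → Fin d) ℂ}
    {M₂ : Matrix (ι₂ → Fin d) (ι₂ → Fin d) ℂ} (h₁ : M₁ ∈ Vk ι₁ d l) (h₂ : M₂ ∈ Vk ι₂ d m) :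
    kron M₁ M₂ ∈ Vk (ι₁ ⊕ ι₂) d (l + m) := by
  have hle : map₂ kronBilin (Vk ι₁ d l) (Vk ι₂ d m) ≤ Vk (ι₁ ⊕ ι₂) d (l + m) := by
    rw [Vk, Vk, map₂_span_span, span_le]
    rintro _ ⟨M₁, ⟨B₁, hB₁, hM₁⟩, M₂, ⟨B₂, hB₂, hM₂⟩, rfl⟩
    exact subset_span ⟨B₁.disjSum B₂, card_disjSum B₁ B₂ ▸ add_le_add hB₁ hB₂, hM₁.kron hM₂⟩
  exact map₂_le.1 hle _ h₁ _ h₂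

variable [Fintype ι₁] [Fintype ι₂]

theorem kron_mulVec_tens (M₁ : Matrix (ι₁ → Fin d) (ι₁ → Fin d) ℂ)
    (M₂ : Matrix (ι₂ → Fin d) (ι₂ → Fin d) ℂ) (ψ : (ι₁ → Fin d) → ℂ) (φ : (ι₂ → Fin d) → ℂ) :
    kron M₁ M₂ *ᵥ tens ψ φ = tens (M₁ *ᵥ ψ) (M₂ *ᵥ φ) := by
  funext z
  simp only [mulVec, dotProduct, tens, sum_mul_sum]
  rw [← (Equiv.sumArrowEquivProdArrow ι₁ ι₂ (Fin d)).symm.sum_comp, Fintype.sum_prod_type]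
  refine sum_congr rfl fun y₁ _ => sum_congr rfl fun y₂ _ => ?_
  simp only [kron, of_apply, Equiv.sumArrowEquivProdArrow_symm_apply_inl,
    Equiv.sumArrowEquivProdArrow_symm_apply_inr]
  ring

theorem Wk_tens (ψ : (ι₁ → Fin d) → ℂ) (φ : (ι₂ → Fin d) → ℂ) (k : ℕ) :
    Wk (tens ψ φ) k =
      ⨆ p ∈ {p : ℕ × ℕ | p.1 + p.2 ≤ k}, map₂ tensBilin (Wk ψ p.1) (Wk φ p.2) := by
  refine le_antisymm ?_ (iSup₂_le fun p hp => map₂_le.2 fun u hu w hw => ?_)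
  · rw [Wk_eq_map, Vk_eq_span_localUnit, map_span, span_le]
    rintro _ ⟨_, ⟨B, hB, a, b, rfl⟩, rfl⟩
    have hcard : (B.toLeft.card, B.toRight.card) ∈ {p : ℕ × ℕ | p.1 + p.2 ≤ k} := by
      simpa [card_toLeft_add_card_toRight] using hB
    refine mem_iSup_of_mem _ (mem_iSup_of_mem hcard ?_)
    rw [LinearMap.flip_apply, mulVecBilin_apply, ← kron_localUnit, kron_mulVec_tens]
    exact apply_mem_map₂ tensBilin ((supportedOn_localUnit _ _ _).mulVec_mem_Wk ψ)
      ((supportedOn_localUnit _ _ _).mulVec_mem_Wk φ)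
  · rw [Wk_eq_map] at hu hw ⊢
    obtain ⟨M₁, hM₁, rfl⟩ := hu
    obtain ⟨M₂, hM₂, rfl⟩ := hw
    exact ⟨kron M₁ M₂, Vk_mono hp (kron_mem_Vk hM₁ hM₂), kron_mulVec_tens M₁ M₂ ψ φ⟩

theorem IsFiltrationBasis.tens {ψ : (ι₁ → Fin d) → ℂ} {φ : (ι₂ → Fin d) → ℂ}
    {α β : Type*} [Fintype α] [Fintype β] {v : α → (ι₁ → Fin d) → ℂ} {w : β → (ι₂ → Fin d) → ℂ}
    {deg₁ : α → ℕ} {deg₂ : β → ℕ}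
    (hv : IsFiltrationBasis (Wk ψ) v deg₁) (hw : IsFiltrationBasis (Wk φ) w deg₂) :
    IsFiltrationBasis (Wk (_root_.tens ψ φ)) (fun p : α × β => _root_.tens (v p.1) (w p.2))
      (fun p => deg₁ p.1 + deg₂ p.2) :=
  hv.map₂ hw tensBilin (linearIndependent_tens hv.1 hw.1) (Wk_tens ψ φ)

end Bipartite

open Matrix in
theorem entPoly_tens_mul_general {ι₁ ι₂ : Type} [Fintype ι₁] [Fintype ι₂]
    [DecidableEq ι₁] [DecidableEq ι₂] {d : ℕ}
    (ψ : (ι₁ → Fin d) → ℂ) (φ : (ι₂ → Fin d) → ℂ) :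
    (∀ k : ℕ, deltaDimW (tens ψ φ) k =
        ∑ l ∈ Finset.range (k + 1), deltaDimW ψ l * deltaDimW φ (k - l)) ∧
      entPoly (tens ψ φ) = entPoly ψ * entPoly φ := by
  obtain ⟨s, deg₁, hv⟩ := exists_isFiltrationBasis_Wk ψ
  obtain ⟨t, deg₂, hw⟩ := exists_isFiltrationBasis_Wk φ
  have hmul : entPoly (tens ψ φ) = entPoly ψ * entPoly φ := by
    rw [(hv.tens hw).entPoly_eq, hv.entPoly_eq, hw.entPoly_eq, Finset.sum_mul_sum,
      ← Finset.univ_product_univ, Finset.sum_product]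
    simp only [pow_add]
  refine ⟨fun k => ?_, hmul⟩
  rw [← coeff_entPoly, hmul, Polynomial.coeff_mul, Finset.Nat.sum_antidiagonal_eq_sum_range_succ
    (fun l m => (entPoly ψ).coeff l * (entPoly φ).coeff m)]
  simp only [coeff_entPoly]

open Matrix in
/-- For pure states `ψ`, `φ` of two disjoint sets of qudits,
`dim ΔW_k^{ψ⊗φ} = Σ_{l+m=k} (dim ΔW_l^ψ)(dim ΔW_m^φ)`; equivalently the entanglement
polynomial is multiplicative: `f(ψ⊗φ) = f(ψ)·f(φ)`. -/
theorem entPoly_tens_mul {ι₁ ι₂ : Type} [Fintype ι₁] [Fintype ι₂]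
    [DecidableEq ι₁] [DecidableEq ι₂] {d : ℕ}
    (ψ : (ι₁ → Fin d) → ℂ) (φ : (ι₂ → Fin d) → ℂ) (hψ : ψ ≠ 0) (hφ : φ ≠ 0) :
    (∀ k : ℕ, deltaDimW (tens ψ φ) k =
        ∑ l ∈ Finset.range (k + 1), deltaDimW ψ l * deltaDimW φ (k - l)) ∧
      entPoly (tens ψ φ) = entPoly ψ * entPoly φ :=
  entPoly_tens_mul_general ψ φ
end

section
/- For a pure state ρ = |ψ⟩⟨ψ| of N qudits, the renormalized state ρ_k = (Σ_{|B|=k} ρ_{B̄}) / (Σ_{|B|=k} tr ρ_{B̄}), where ρ_{B̄} = (I_B/d_B) ⊗ tr_B(ρ), satisfies Im(ρ_k) = W_k^ψ, and hence Rank(ρ_k) = dim W_k^ψ. -/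
noncomputable section

/-- `ρ_{B̄} = (I_B/d_B) ⊗ tr_B(ρ)`, viewed as an operator on the full Hilbert space:
the state obtained from `ρ` by tracing out the sites in `B` and tensoring with the
normalized identity on `B`. -/
def redState {N : ℕ} (d : ℕ) (B : Finset (Fin N))
    (ρ : Matrix (Fin N → Fin d) (Fin N → Fin d) ℂ) :
    Matrix (Fin N → Fin d) (Fin N → Fin d) ℂ :=
  Matrix.of fun x y =>
    if ∀ i ∈ B, x i = y i then
      ((d : ℂ) ^ B.card)⁻¹ *
        ∑ w : {i // i ∈ B} → Fin d,
          ρ (fun i => if h : i ∈ B then w ⟨i, h⟩ else x i)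
            (fun i => if h : i ∈ B then w ⟨i, h⟩ else y i)
    else 0

/-- The pure state density matrix `|ψ⟩⟨ψ|`. -/
def pureMat {N d : ℕ} (ψ : (Fin N → Fin d) → ℂ) :
    Matrix (Fin N → Fin d) (Fin N → Fin d) ℂ :=
  Matrix.of fun x y => ψ x * star (ψ y)

/-- The renormalized state `ρ_k = (Σ_{|B|=k} ρ_{B̄}) / (Σ_{|B|=k} tr ρ_{B̄})`. -/
def renormState {N : ℕ} (d : ℕ) (ψ : (Fin N → Fin d) → ℂ) (k : ℕ) :
    Matrix (Fin N → Fin d) (Fin N → Fin d) ℂ :=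
  (∑ B ∈ Finset.powersetCard k (Finset.univ : Finset (Fin N)),
      (redState d B (pureMat ψ)).trace)⁻¹ •
    ∑ B ∈ Finset.powersetCard k (Finset.univ : Finset (Fin N)), redState d B (pureMat ψ)

end


noncomputable section AuxiliaryLemmas

open Matrix

variable {N d : ℕ}

/-- merge: use `w` on `B`, `x` off `B`. -/
def mrg (B : Finset (Fin N)) (w : {i // i ∈ B} → Fin d) (x : Fin N → Fin d) :
    Fin N → Fin d :=
  fun i => if h : i ∈ B then w ⟨i, h⟩ else x i

/-- The vector `e_u ⊗ ψ_w` on the sub-block `B`. -/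
def outv (B : Finset (Fin N)) (u w : {i // i ∈ B} → Fin d) (ψ : (Fin N → Fin d) → ℂ) :
    (Fin N → Fin d) → ℂ :=
  fun x => if ∀ i : {i // i ∈ B}, x i.1 = u i then ψ (mrg B w x) else 0

lemma pureMat_mulVec (φ v : (Fin N → Fin d) → ℂ) :
    (pureMat φ).mulVec v = (star φ ⬝ᵥ v) • φ := by
  ext x
  simp only [pureMat, Matrix.mulVec, dotProduct, Pi.smul_apply, Pi.star_apply,
    smul_eq_mul, Matrix.of_apply, Finset.sum_mul]
  exact Finset.sum_congr rfl fun y _ => by ring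

lemma sum_mulVec' {J : Type*} (s : Finset J) (A : J → Matrix (Fin N → Fin d) (Fin N → Fin d) ℂ)
    (v : (Fin N → Fin d) → ℂ) :
    (∑ j ∈ s, A j).mulVec v = ∑ j ∈ s, (A j).mulVec v := by
  ext x
  simp only [Matrix.mulVec, dotProduct, Finset.sum_apply, Finset.sum_mul,
    Matrix.sum_apply]
  rw [Finset.sum_comm]

lemma range_sum_pureMat {J : Type*} (s : Finset J) (φ : J → (Fin N → Fin d) → ℂ) :
    LinearMap.range (∑ j ∈ s, pureMat (φ j)).mulVecLin
      = Submodule.span ℂ (φ '' ↑s) := by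
  set S := ∑ j ∈ s, pureMat (φ j) with hS
  set V := Submodule.span ℂ (φ '' (s : Set J)) with hV
  have hT : ∀ v, S.mulVec v = ∑ j ∈ s, (star (φ j) ⬝ᵥ v) • φ j := by
    intro v
    rw [hS, sum_mulVec']
    exact Finset.sum_congr rfl fun j _ => pureMat_mulVec _ _
  have hmem : ∀ v, S.mulVec v ∈ V := by
    intro v
    rw [hT]
    exact Submodule.sum_mem _ fun j hj =>
      Submodule.smul_mem _ _ (Submodule.subset_span ⟨j, hj, rfl⟩)
  have hker : ∀ v ∈ V, S.mulVec v = 0 → v = 0 := by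
    intro v hv h0
    have hc : ∀ j ∈ s, star (φ j) ⬝ᵥ v = 0 := by
      have h1 : star v ⬝ᵥ S.mulVec v = 0 := by rw [h0]; simp
      rw [hT] at h1
      have h2 : ∀ j ∈ s, star v ⬝ᵥ ((star (φ j) ⬝ᵥ v) • φ j)
          = (Complex.normSq (star (φ j) ⬝ᵥ v) : ℂ) := by
        intro j _
        rw [dotProduct_smul]
        have : star v ⬝ᵥ φ j = star (star (φ j) ⬝ᵥ v) := by
          simp only [dotProduct, star_sum, star_mul', star_star, Pi.star_apply]
          exact Finset.sum_congr rfl fun y _ => by ring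
        rw [this, smul_eq_mul, Complex.star_def, Complex.mul_conj]
      have hdist : star v ⬝ᵥ (∑ j ∈ s, (star (φ j) ⬝ᵥ v) • φ j)
          = ∑ j ∈ s, star v ⬝ᵥ ((star (φ j) ⬝ᵥ v) • φ j) := by
        simp only [dotProduct, Finset.sum_apply, Finset.mul_sum]
        rw [Finset.sum_comm]
      rw [hdist, Finset.sum_congr rfl h2] at h1
      have h3 : ∑ j ∈ s, Complex.normSq (star (φ j) ⬝ᵥ v) = 0 := by
        exact_mod_cast h1
      intro j hj
      have := (Finset.sum_eq_zero_iff_of_nonneg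
        (fun j _ => Complex.normSq_nonneg _)).mp h3 j hj
      exact Complex.normSq_eq_zero.mp this
    have horth : ∀ w ∈ V, star w ⬝ᵥ v = 0 := by
      intro w hw
      induction hw using Submodule.span_induction with
      | mem w hw => obtain ⟨j, hj, rfl⟩ := hw; exact hc j hj
      | zero => simp
      | add a b _ _ ha hb => rw [star_add, add_dotProduct, ha, hb, add_zero]
      | smul c a _ ha => rw [star_smul, smul_dotProduct, ha, smul_zero]
    have := horth v hv
    open scoped ComplexOrder in
    exact dotProduct_star_self_eq_zero.mp this
  apply le_antisymm
  · rintro w ⟨v, rfl⟩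
    exact hmem v
  · have hres : ∀ w ∈ V, S.mulVecLin w ∈ V := fun w _ => hmem w
    set T' : V →ₗ[ℂ] V := S.mulVecLin.restrict hres with hT'
    have hinj : Function.Injective T' := by
      rw [← LinearMap.ker_eq_bot, LinearMap.ker_eq_bot']
      rintro ⟨v, hv⟩ h
      have h0 : S.mulVec v = 0 := by
        have := congrArg Subtype.val h
        simpa [hT', LinearMap.restrict_apply] using this
      exact Subtype.ext (hker v hv h0)
    have hsurj := LinearMap.injective_iff_surjective.mp hinj
    intro v hv
    obtain ⟨⟨u, hu⟩, h⟩ := hsurj ⟨v, hv⟩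
    exact ⟨u, congrArg Subtype.val h⟩

lemma redState_eq_sum (B : Finset (Fin N)) (ψ : (Fin N → Fin d) → ℂ) :
    redState d B (pureMat ψ)
      = ((d : ℂ) ^ B.card)⁻¹ •
        ∑ p : ({i // i ∈ B} → Fin d) × ({i // i ∈ B} → Fin d),
          pureMat (outv B p.1 p.2 ψ) := by
  ext x y
  have hsum : (∑ p : ({i // i ∈ B} → Fin d) × ({i // i ∈ B} → Fin d),
        pureMat (outv B p.1 p.2 ψ)) x y
      = ∑ w : {i // i ∈ B} → Fin d, ∑ u : {i // i ∈ B} → Fin d,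
          outv B u w ψ x * star (outv B u w ψ y) := by
    rw [Matrix.sum_apply]
    rw [Fintype.sum_prod_type]
    rw [Finset.sum_comm]
    rfl
  have hinner : ∀ w : {i // i ∈ B} → Fin d,
      (∑ u : {i // i ∈ B} → Fin d, outv B u w ψ x * star (outv B u w ψ y))
      = outv B (fun i => x i.1) w ψ x * star (outv B (fun i => x i.1) w ψ y) := by
    intro w
    refine Finset.sum_eq_single _ (fun u _ hne => ?_) (by simp)
    have : outv B u w ψ x = 0 := by
      rw [outv, if_neg]
      intro h
      exact hne (funext fun i => (h i).symm)
    rw [this, zero_mul]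
  by_cases hxy : ∀ i ∈ B, x i = y i
  · simp only [redState, Matrix.of_apply, if_pos hxy, Matrix.smul_apply, hsum, smul_eq_mul]
    rw [Finset.sum_congr rfl fun w _ => hinner w]
    congr 1
    refine Finset.sum_congr rfl fun w _ => ?_
    have hcx : ∀ i : {i // i ∈ B}, x i.1 = x i.1 := fun i => rfl
    have hcy : ∀ i : {i // i ∈ B}, y i.1 = x i.1 := fun i => (hxy i.1 i.2).symm
    have h1 : outv B (fun i => x i.1) w ψ x = ψ (mrg B w x) := by
      rw [outv, if_pos hcx]
    have h2 : outv B (fun i => x i.1) w ψ y = ψ (mrg B w y) := by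
      rw [outv, if_pos hcy]
    rw [h1, h2]
    rfl
  · simp only [redState, Matrix.of_apply, if_neg hxy, Matrix.smul_apply, hsum, smul_eq_mul]
    rw [Finset.sum_congr rfl fun w _ => hinner w]
    push_neg at hxy
    obtain ⟨i, hiB, hne⟩ := hxy
    have : ∀ w, outv B (fun i => x i.1) w ψ y = 0 := by
      intro w
      have hcy : ¬ ∀ j : {j // j ∈ B}, y j.1 = x j.1 := by
        intro h
        exact hne ((h ⟨i, hiB⟩).symm)
      rw [outv, if_neg hcy]
    simp [this]

lemma mrg_symmEquiv (B : Finset (Fin N)) (w a : {i // i ∈ B} → Fin d)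
    (z : {i // i ∉ B} → Fin d) :
    mrg B w ((Equiv.piEquivPiSubtypeProd (· ∈ B) (fun _ => Fin d)).symm (a, z))
      = (Equiv.piEquivPiSubtypeProd (· ∈ B) (fun _ => Fin d)).symm (w, z) := by
  funext i
  simp only [mrg, Equiv.piEquivPiSubtypeProd_symm_apply]
  by_cases h : i ∈ B
  · simp [h]
  · simp [h]

lemma trace_redState (B : Finset (Fin N)) (ψ : (Fin N → Fin d) → ℂ)
    (hd : ((d : ℂ) ^ B.card) ≠ 0)
    (hψ : ∑ x : Fin N → Fin d, star (ψ x) * ψ x = 1) :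
    (redState d B (pureMat ψ)).trace = 1 := by
  set E := Equiv.piEquivPiSubtypeProd (· ∈ B) (fun _ : Fin N => Fin d) with hE
  have hdiag : ∀ x : Fin N → Fin d, redState d B (pureMat ψ) x x
      = ((d : ℂ) ^ B.card)⁻¹ * ∑ w : {i // i ∈ B} → Fin d,
          ψ (mrg B w x) * star (ψ (mrg B w x)) := by
    intro x
    rw [redState, Matrix.of_apply, if_pos (fun i _ => rfl)]
    rfl
  have h1 : (redState d B (pureMat ψ)).trace
      = ((d : ℂ) ^ B.card)⁻¹ * ∑ w : {i // i ∈ B} → Fin d, ∑ x : Fin N → Fin d,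
          ψ (mrg B w x) * star (ψ (mrg B w x)) := by
    rw [Matrix.trace]
    simp only [Matrix.diag_apply, hdiag]
    rw [← Finset.mul_sum, Finset.sum_comm]
  have h2 : ∀ w : {i // i ∈ B} → Fin d,
      (∑ x : Fin N → Fin d, ψ (mrg B w x) * star (ψ (mrg B w x)))
      = (d : ℂ) ^ B.card * ∑ z : {i // i ∉ B} → Fin d,
          ψ (E.symm (w, z)) * star (ψ (E.symm (w, z))) := by
    intro w
    rw [← Equiv.sum_comp E.symm (fun x => ψ (mrg B w x) * star (ψ (mrg B w x)))]
    rw [Fintype.sum_prod_type]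
    have : ∀ (a : {i // i ∈ B} → Fin d) (z : {i // i ∉ B} → Fin d),
        ψ (mrg B w (E.symm (a, z))) * star (ψ (mrg B w (E.symm (a, z))))
        = ψ (E.symm (w, z)) * star (ψ (E.symm (w, z))) := by
      intro a z
      rw [mrg_symmEquiv]
    simp only [this]
    rw [Finset.sum_const, Finset.card_univ, nsmul_eq_mul]
    congr 1
    simp [Fintype.card_fun, Fintype.card_coe]
  have h3 : (∑ w : {i // i ∈ B} → Fin d, ∑ z : {i // i ∉ B} → Fin d,
      ψ (E.symm (w, z)) * star (ψ (E.symm (w, z)))) = 1 := by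
    have h4 : (∑ p : ({i // i ∈ B} → Fin d) × ({i // i ∉ B} → Fin d),
        ψ (E.symm p) * star (ψ (E.symm p))) = 1 := by
      rw [Equiv.sum_comp E.symm (fun x => ψ x * star (ψ x)), ← hψ]
      exact Finset.sum_congr rfl fun x _ => mul_comm _ _
    rw [← h4]
    exact (Fintype.sum_prod_type (f := fun p => ψ (E.symm p) * star (ψ (E.symm p)))).symm
  rw [h1]
  simp only [h2]
  rw [← Finset.mul_sum, h3, mul_one, inv_mul_cancel₀ hd]

lemma supportedOn_mono {B₁ B₂ : Finset (Fin N)} (hB : B₁ ⊆ B₂)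
    {M : Matrix (Fin N → Fin d) (Fin N → Fin d) ℂ} (h : SupportedOn d B₁ M) :
    SupportedOn d B₂ M := by
  obtain ⟨h1, h2⟩ := h
  constructor
  · rintro x y ⟨i, hi, hne⟩
    exact h1 x y ⟨i, fun hi1 => hi (hB hi1), hne⟩
  · intro x y z z'
    by_cases hc : ∀ i ∈ B₂, i ∉ B₁ → x i = y i
    · have key : ∀ zz : Fin N → Fin d,
          (fun i => if i ∈ B₂ then x i else zz i)
            = (fun i => if i ∈ B₁ then x i else (fun j => if j ∈ B₂ then x j else zz j) i)
          ∧ (fun i => if i ∈ B₂ then y i else zz i)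
            = (fun i => if i ∈ B₁ then y i else (fun j => if j ∈ B₂ then x j else zz j) i) := by
        intro zz
        constructor
        · funext i
          by_cases h1i : i ∈ B₁
          · simp [h1i, hB h1i]
          · simp [h1i]
        · funext i
          by_cases h1i : i ∈ B₁
          · simp [h1i, hB h1i]
          · by_cases h2i : i ∈ B₂
            · simp [h1i, h2i, (hc i h2i h1i).symm]
            · simp [h1i, h2i]
      rw [(key z).1, (key z).2, (key z').1, (key z').2]
      exact h2 x y _ _
    · push_neg at hc
      obtain ⟨i, hi2, hi1, hne⟩ := hc
      have hz : ∀ zz : Fin N → Fin d,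
          M (fun i => if i ∈ B₂ then x i else zz i)
            (fun i => if i ∈ B₂ then y i else zz i) = 0 := by
        intro zz
        apply h1
        exact ⟨i, hi1, by simp [hi2, hne]⟩
      rw [hz z, hz z']

/-- The elementary local operator `|u⟩⟨w|_B ⊗ I`. -/
def locMat (B : Finset (Fin N)) (u w : {i // i ∈ B} → Fin d) :
    Matrix (Fin N → Fin d) (Fin N → Fin d) ℂ :=
  Matrix.of fun x y =>
    if (∀ i : {i // i ∈ B}, x i.1 = u i) ∧ y = mrg B w x then 1 else 0

lemma supportedOn_locMat (B : Finset (Fin N)) (u w : {i // i ∈ B} → Fin d) :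
    SupportedOn d B (locMat B u w) := by
  constructor
  · rintro x y ⟨i, hi, hne⟩
    rw [locMat, Matrix.of_apply, if_neg]
    rintro ⟨-, rfl⟩
    exact hne (by simp [mrg, hi])
  · intro x y z z'
    have key : ∀ zz : Fin N → Fin d,
        locMat B u w (fun i => if i ∈ B then x i else zz i)
          (fun i => if i ∈ B then y i else zz i)
        = if (∀ i : {i // i ∈ B}, x i.1 = u i) ∧
            (∀ i : {i // i ∈ B}, y i.1 = w i) then 1 else 0 := by
      intro zz
      rw [locMat, Matrix.of_apply]
      apply if_congr _ rfl rfl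
      constructor
      · rintro ⟨hx, hy⟩
        constructor
        · intro i
          have := hx i
          simpa [i.2] using this
        · intro i
          have := congrFun hy i.1
          simpa [mrg, i.2] using this
      · rintro ⟨hx, hy⟩
        constructor
        · intro i
          simpa [i.2] using hx i
        · funext i
          by_cases hiB : i ∈ B
          · simpa [mrg, hiB] using hy ⟨i, hiB⟩
          · simp [mrg, hiB]
    rw [key z, key z']

lemma locMat_mulVec (B : Finset (Fin N)) (u w : {i // i ∈ B} → Fin d)
    (ψ : (Fin N → Fin d) → ℂ) :
    (locMat B u w).mulVec ψ = outv B u w ψ := by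
  funext x
  rw [Matrix.mulVec, outv]
  by_cases hx : ∀ i : {i // i ∈ B}, x i.1 = u i
  · rw [if_pos hx]
    have : ∀ y, locMat B u w x y * ψ y = if y = mrg B w x then ψ y else 0 := by
      intro y
      rw [locMat, Matrix.of_apply]
      by_cases hy : y = mrg B w x
      · rw [if_pos ⟨hx, hy⟩, if_pos hy, one_mul]
      · rw [if_neg (fun hc => hy hc.2), if_neg hy, zero_mul]
    rw [dotProduct]
    simp only [this]
    rw [Finset.sum_ite_eq' Finset.univ (mrg B w x) ψ, if_pos (Finset.mem_univ _)]
  · rw [if_neg hx]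
    have : ∀ y, locMat B u w x y * ψ y = 0 := by
      intro y
      rw [locMat, Matrix.of_apply, if_neg (fun hc => hx hc.1), zero_mul]
    rw [dotProduct]
    simp only [this, Finset.sum_const_zero]

lemma supported_apply_mrg (B : Finset (Fin N)) (x₀ x : Fin N → Fin d)
    (w : {i // i ∈ B} → Fin d)
    {M : Matrix (Fin N → Fin d) (Fin N → Fin d) ℂ} (hM : SupportedOn d B M) :
    M x (mrg B w x) = M (mrg B (fun i => x i.1) x₀) (mrg B w x₀) := by
  obtain ⟨-, h2⟩ := hM
  have e1 : x = fun i => if i ∈ B then x i else x i := by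
    funext i; rw [ite_self]
  have e2 : mrg B w x = fun i => if i ∈ B then mrg B w x₀ i else x i := by
    funext i
    by_cases h : i ∈ B <;> simp [mrg, h]
  have e3 : (fun i => if i ∈ B then x i else x₀ i) = mrg B (fun i => x i.1) x₀ := by
    funext i
    by_cases h : i ∈ B <;> simp [mrg, h]
  have e4 : (fun i => if i ∈ B then mrg B w x₀ i else x₀ i) = mrg B w x₀ := by
    funext i
    by_cases h : i ∈ B <;> simp [mrg, h]
  calc M x (mrg B w x)
      = M (fun i => if i ∈ B then x i else x i)
          (fun i => if i ∈ B then mrg B w x₀ i else x i) := by rw [← e1, ← e2]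
    _ = M (fun i => if i ∈ B then x i else x₀ i)
          (fun i => if i ∈ B then mrg B w x₀ i else x₀ i) := h2 x (mrg B w x₀) x x₀
    _ = M (mrg B (fun i => x i.1) x₀) (mrg B w x₀) := by rw [e3, e4]

lemma supported_mulVec_eq (B : Finset (Fin N)) (x₀ : Fin N → Fin d)
    {M : Matrix (Fin N → Fin d) (Fin N → Fin d) ℂ} (hM : SupportedOn d B M)
    (ψ : (Fin N → Fin d) → ℂ) :
    M.mulVec ψ = ∑ p : ({i // i ∈ B} → Fin d) × ({i // i ∈ B} → Fin d),
      M (mrg B p.1 x₀) (mrg B p.2 x₀) • outv B p.1 p.2 ψ := by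
  funext x
  set E := Equiv.piEquivPiSubtypeProd (· ∈ B) (fun _ : Fin N => Fin d) with hE
  have hsymm : ∀ (w : {i // i ∈ B} → Fin d),
      E.symm (w, fun i : {i // i ∉ B} => x i.1) = mrg B w x := by
    intro w
    funext i
    by_cases h : i ∈ B <;> simp [hE, mrg, h]
  have hzsum : ∀ w : {i // i ∈ B} → Fin d,
      (∑ z : {i // i ∉ B} → Fin d, M x (E.symm (w, z)) * ψ (E.symm (w, z)))
      = M x (mrg B w x) * ψ (mrg B w x) := by
    intro w
    rw [Finset.sum_eq_single (fun i : {i // i ∉ B} => x i.1)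
      (fun z _ hz => ?_) (by simp), hsymm]
    have hex : ∃ i ∉ B, x i ≠ E.symm (w, z) i := by
      by_contra hcon
      push_neg at hcon
      apply hz
      funext i
      have h1 := hcon i.1 i.2
      have h2 : E.symm (w, z) i.1 = z i := by
        simp [hE, i.2]
      rw [h2] at h1
      exact h1.symm
    exact mul_eq_zero_of_left (hM.1 x _ hex) _
  have hLHS : M.mulVec ψ x
      = ∑ w : {i // i ∈ B} → Fin d, M x (mrg B w x) * ψ (mrg B w x) := by
    rw [Matrix.mulVec, dotProduct,
      ← Equiv.sum_comp E.symm (fun y => M x y * ψ y), Fintype.sum_prod_type]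
    exact Finset.sum_congr rfl fun w _ => hzsum w
  rw [hLHS]
  have hRHS : (∑ p : ({i // i ∈ B} → Fin d) × ({i // i ∈ B} → Fin d),
        M (mrg B p.1 x₀) (mrg B p.2 x₀) • outv B p.1 p.2 ψ) x
      = ∑ w : {i // i ∈ B} → Fin d, ∑ u : {i // i ∈ B} → Fin d,
          M (mrg B u x₀) (mrg B w x₀) * outv B u w ψ x := by
    rw [Finset.sum_apply, Fintype.sum_prod_type, Finset.sum_comm]
    rfl
  rw [hRHS]
  refine Finset.sum_congr rfl fun w _ => ?_
  have hterm : ∀ u : {i // i ∈ B} → Fin d,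
      M (mrg B u x₀) (mrg B w x₀) * outv B u w ψ x
      = if (fun i : {i // i ∈ B} => x i.1) = u then
          M (mrg B u x₀) (mrg B w x₀) * ψ (mrg B w x) else 0 := by
    intro u
    rw [outv]
    by_cases h : ∀ i : {i // i ∈ B}, x i.1 = u i
    · rw [if_pos h, if_pos (funext h)]
    · rw [if_neg h, mul_zero, if_neg (fun he => h fun i => congrFun he i)]
  simp only [hterm]
  rw [Finset.sum_ite_eq Finset.univ (fun i : {i // i ∈ B} => x i.1)
    (fun u => M (mrg B u x₀) (mrg B w x₀) * ψ (mrg B w x)), if_pos (Finset.mem_univ _)]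
  rw [supported_apply_mrg B x₀ x w ⟨hM.1, hM.2⟩]

/-- `M ↦ M.mulVec ψ` as a linear map. -/
def mulVecL (ψ : (Fin N → Fin d) → ℂ) :
    Matrix (Fin N → Fin d) (Fin N → Fin d) ℂ →ₗ[ℂ] ((Fin N → Fin d) → ℂ) where
  toFun M := M.mulVec ψ
  map_add' A B := Matrix.add_mulVec A B ψ
  map_smul' c A := Matrix.smul_mulVec c A ψ

lemma Wk_eq_span (ψ : (Fin N → Fin d) → ℂ) (k : ℕ) :
    Wk ψ k = Submodule.span ℂ ((mulVecL ψ) ''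
      {M | ∃ B : Finset (Fin N), B.card ≤ k ∧ SupportedOn d B M}) := by
  have h1 : {v | ∃ M ∈ Vk (Fin N) d k, v = M.mulVec ψ}
      = (mulVecL ψ) '' (Vk (Fin N) d k : Set _) := by
    ext v
    constructor
    · rintro ⟨M, hM, rfl⟩; exact ⟨M, hM, rfl⟩
    · rintro ⟨M, hM, rfl⟩; exact ⟨M, hM, rfl⟩
  rw [Wk, h1, ← Submodule.map_span, Submodule.span_eq, Vk, Submodule.map_span]

lemma span_outv_eq_Wk {k : ℕ} (hk : k ≤ N) (x₀ : Fin N → Fin d)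
    (ψ : (Fin N → Fin d) → ℂ) :
    Submodule.span ℂ
      ((fun j : (Σ B : Finset (Fin N), ({i // i ∈ B} → Fin d) × ({i // i ∈ B} → Fin d)) =>
          outv j.1 j.2.1 j.2.2 ψ) ''
        ↑((Finset.powersetCard k (Finset.univ : Finset (Fin N))).sigma
            (fun B => (Finset.univ :
              Finset (({i // i ∈ B} → Fin d) × ({i // i ∈ B} → Fin d))))))
      = Wk ψ k := by
  rw [Wk_eq_span]
  apply le_antisymm
  · rw [Submodule.span_le]
    rintro v ⟨⟨B, u, w⟩, hj, rfl⟩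
    rw [Finset.mem_coe, Finset.mem_sigma] at hj
    have hB : B.card ≤ k := le_of_eq (Finset.mem_powersetCard_univ.mp hj.1)
    exact Submodule.subset_span
      ⟨locMat B u w, ⟨B, hB, supportedOn_locMat B u w⟩, locMat_mulVec B u w ψ⟩
  · rw [Submodule.span_le]
    rintro v ⟨M, ⟨B', hB'k, hsupp⟩, rfl⟩
    obtain ⟨B, hBsub, hBcard⟩ := Finset.exists_superset_card_eq hB'k (by simpa using hk)
    have hsupp2 := supportedOn_mono hBsub hsupp
    have heq : (mulVecL ψ) M = M.mulVec ψ := rfl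
    rw [heq, supported_mulVec_eq B x₀ hsupp2 ψ]
    refine Submodule.sum_mem _ fun p _ => Submodule.smul_mem _ _ (Submodule.subset_span ?_)
    refine ⟨⟨B, p⟩, ?_, rfl⟩
    rw [Finset.mem_coe, Finset.mem_sigma]
    exact ⟨Finset.mem_powersetCard_univ.mpr hBcard, Finset.mem_univ _⟩

end AuxiliaryLemmas

open Matrix in
/-- For a normalized pure state `ψ` of `N` qudits, the renormalized state
`ρ_k` satisfies `Im(ρ_k) = W_k^ψ`, and hence `Rank(ρ_k) = dim W_k^ψ`. -/
theorem range_renormState_eq_Wk {N d k : ℕ} (hk : k ≤ N) (ψ : (Fin N → Fin d) → ℂ)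
    (hψ : ∑ x : Fin N → Fin d, star (ψ x) * ψ x = 1) :
    LinearMap.range (renormState d ψ k).mulVecLin = Wk ψ k ∧
      (renormState d ψ k).rank = Module.finrank ℂ (Wk ψ k) := by
  have hNE : Nonempty (Fin N → Fin d) := by
    by_contra h
    rw [not_nonempty_iff] at h
    rw [Finset.univ_eq_empty, Finset.sum_empty] at hψ
    exact zero_ne_one hψ
  obtain ⟨x₀⟩ := hNE
  have hdk : ((d : ℂ)) ^ k ≠ 0 := by
    rcases Nat.eq_zero_or_pos k with rfl | hkpos
    · simp
    · have hN : 0 < N := lt_of_lt_of_le hkpos hk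
      have hd : d ≠ 0 := by
        rcases Nat.eq_zero_or_pos d with rfl | h
        · exact (x₀ ⟨0, hN⟩).elim0
        · omega
      exact pow_ne_zero _ (Nat.cast_ne_zero.mpr hd)
  set P := Finset.powersetCard k (Finset.univ : Finset (Fin N)) with hP
  have hcardB : ∀ B ∈ P, B.card = k := fun B hB => Finset.mem_powersetCard_univ.mp hB
  have htr : ∀ B ∈ P, (redState d B (pureMat ψ)).trace = 1 := fun B hB =>
    trace_redState B ψ (by rw [hcardB B hB]; exact hdk) hψ
  have htrsum : (∑ B ∈ P, (redState d B (pureMat ψ)).trace) = ((N.choose k : ℕ) : ℂ) := by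
    rw [Finset.sum_congr rfl htr, Finset.sum_const, nsmul_eq_mul, mul_one]
    rw [hP, Finset.card_powersetCard, Finset.card_univ, Fintype.card_fin]
  have hchoose : ((N.choose k : ℕ) : ℂ) ≠ 0 :=
    Nat.cast_ne_zero.mpr (Nat.choose_pos hk).ne'
  set Φ : (Σ B : Finset (Fin N), ({i // i ∈ B} → Fin d) × ({i // i ∈ B} → Fin d)) →
      ((Fin N → Fin d) → ℂ) := fun j => outv j.1 j.2.1 j.2.2 ψ with hΦ
  set s := P.sigma (fun B => (Finset.univ :
      Finset (({i // i ∈ B} → Fin d) × ({i // i ∈ B} → Fin d)))) with hs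
  have hdecomp : (∑ B ∈ P, redState d B (pureMat ψ))
      = ((d : ℂ) ^ k)⁻¹ • ∑ j ∈ s, pureMat (Φ j) := by
    rw [hs, Finset.sum_sigma, Finset.smul_sum]
    refine Finset.sum_congr rfl fun B hB => ?_
    rw [redState_eq_sum, hcardB B hB]
  have hren : renormState d ψ k
      = (((N.choose k : ℕ) : ℂ)⁻¹ * ((d : ℂ) ^ k)⁻¹) • ∑ j ∈ s, pureMat (Φ j) := by
    unfold renormState
    rw [← hP, htrsum, hdecomp]
    rw [smul_smul]
  have hc : (((N.choose k : ℕ) : ℂ)⁻¹ * ((d : ℂ) ^ k)⁻¹) ≠ 0 :=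
    mul_ne_zero (inv_ne_zero hchoose) (inv_ne_zero hdk)
  have hlin : (renormState d ψ k).mulVecLin
      = (((N.choose k : ℕ) : ℂ)⁻¹ * ((d : ℂ) ^ k)⁻¹) • (∑ j ∈ s, pureMat (Φ j)).mulVecLin := by
    rw [hren]
    ext v
    simp [Matrix.mulVecLin, Matrix.smul_mulVec]
  have h1 : LinearMap.range (renormState d ψ k).mulVecLin = Wk ψ k := by
    rw [hlin, LinearMap.range_smul _ _ hc, range_sum_pureMat]
    exact span_outv_eq_Wk hk x₀ ψ
  refine ⟨h1, ?_⟩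
  have h2 : (renormState d ψ k).rank
      = Module.finrank ℂ (LinearMap.range (renormState d ψ k).mulVecLin) := rfl
  rw [h2, h1]
end
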